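/- Let n ≥ 2 and, in the polynomial ring ℤ[X₁,…,X_n], set z_k := 2X_k for 1 ≤ k ≤ n−1 and z_n := X₁ + ⋯ + X_n. For integers d₁,…,d_n, the polynomial d₁X₁² + ⋯ + d_nX_n² lies in the ℤ-submodule spanned by the products z_i·z_j (1 ≤ i ≤ j ≤ n) if and only if: d₁ + d₂ ≡ 0 (mod 4) when n = 2, and d_i ≡ 0 (mod 2) for all i together with d_i ≡ d_j (mod 4) for all i, j when n ≥ 3. (This is the congruence condition (4.6) in the proof of Proposition 4.1 of the paper, characterizing the W-invariant integral quadratic forms on the lattice T_H^*.) -/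

import Mathlib

/-!
With `S = X₁ + ⋯ + X_n`, the products `z_i z_j` are `4X_iX_j`, `2X_iS` (`i, j < n`) and `S²`.
At an integer point with even coordinate sum every `z_k` takes an even value, so every element
of their span takes a value divisible by 4 there; at `e_i + e_j` the form `∑ d_k X_k²` takes the
value `d_i + d_j`. Conversely, if `4 ∣ d_i + d_j` for all `i ≠ j`, put `c = d_n` and
`T = X₁ + ⋯ + X_{n-1}`. Then `c (X_n² - T²) = c (z_n² - ∑_{i<n} z_i z_n)` and
`∑ d_k X_k² = c (X_n² - T²) + ∑_{i<n} (d_i + c) X_i² + ∑_{i<j<n} 2c X_iX_j`, where all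
coefficients of the last two sums are divisible by 4 since
`2c = (d_i + c) + (d_j + c) - (d_i + d_j)`.
-/

open MvPolynomial

/-- The element `z_k` of the proof of Proposition 4.1: `z_k = 2X_k` for `1 ≤ k ≤ n−1`
(indices `(k : ℕ) < n − 1` of `Fin n`) and `z_n = X₁ + ⋯ + X_n` (the last index). -/
noncomputable def zGen (n : ℕ) (k : Fin n) : MvPolynomial (Fin n) ℤ :=
  if (k : ℕ) < n - 1 then 2 * X k else ∑ i : Fin n, X i

open Finset

theorem sq_sum_eq_sum_sq_add_two_mul {ι R : Type*} [LinearOrder ι] [CommSemiring R]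
    (s : Finset ι) (x : ι → R) :
    (∑ i ∈ s, x i) ^ 2 = ∑ i ∈ s, x i ^ 2 + 2 * ∑ j ∈ s, ∑ i ∈ s with i < j, x i * x j := by
  induction s using Finset.induction_on_max with
  | empty => simp
  | insert a s ha ih =>
    have has : a ∉ s := fun h => lt_irrefl a (ha a h)
    have hlt : (insert a s).filter (· < a) = s := by
      rw [filter_insert, if_neg (lt_irrefl a), filter_true_of_mem ha]
    have hrest : ∑ j ∈ s, ∑ i ∈ insert a s with i < j, x i * x j
        = ∑ j ∈ s, ∑ i ∈ s with i < j, x i * x j :=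
      sum_congr rfl fun j hj => by rw [filter_insert, if_neg (not_lt.2 (ha j hj).le)]
    rw [sum_insert has, sum_insert has, sum_insert has, hlt, hrest, add_sq, ih, ← sum_mul]
    ring

theorem forall_ne_four_dvd_add_iff {ι : Type*} [Fintype ι] (hι : 3 ≤ Fintype.card ι)
    (d : ι → ℤ) :
    (∀ i j, i ≠ j → 4 ∣ d i + d j) ↔ (∀ i, 2 ∣ d i) ∧ ∀ i j, d i ≡ d j [ZMOD 4] := by
  classical
  constructor
  · intro h
    have heven (i : ι) : 2 ∣ d i := by
      have hcard : 1 < #(univ.erase i) := by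
        rw [card_erase_of_mem (mem_univ i), card_univ]; omega
      obtain ⟨j, hj, k, hk, hjk⟩ := one_lt_card.1 hcard
      have := h i j (ne_of_mem_erase hj).symm
      have := h i k (ne_of_mem_erase hk).symm
      have := h j k hjk
      omega
    refine ⟨heven, fun i j => ?_⟩
    rcases eq_or_ne i j with rfl | hij
    · rfl
    · have := h i j hij
      have := heven j
      unfold Int.ModEq
      omega
  · rintro ⟨heven, hmod⟩ i j -
    have := heven i
    have := hmod i j
    unfold Int.ModEq at this
    omega

noncomputable def zGenMulSpan (n : ℕ) : Submodule ℤ (MvPolynomial (Fin n) ℤ) :=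
  Submodule.span ℤ {p | ∃ i j : Fin n, i ≤ j ∧ p = zGen n i * zGen n j}

noncomputable def diagSq {σ : Type*} [Fintype σ] (d : σ → ℤ) : MvPolynomial σ ℤ :=
  ∑ i, C (d i) * X i ^ 2

theorem eval_diagSq {σ : Type*} [Fintype σ] (d v : σ → ℤ) :
    eval v (diagSq d) = ∑ i, d i * v i ^ 2 := by
  simp [diagSq]

theorem zGen_mul_mem {n : ℕ} (i j : Fin n) : zGen n i * zGen n j ∈ zGenMulSpan n := by
  rcases le_total i j with h | h
  · exact Submodule.subset_span ⟨i, j, h, rfl⟩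
  · rw [mul_comm]; exact Submodule.subset_span ⟨j, i, h, rfl⟩

section Necessity

variable {n : ℕ} {v : Fin n → ℤ}

theorem two_dvd_eval_zGen (hv : 2 ∣ ∑ i, v i) (k : Fin n) : 2 ∣ eval v (zGen n k) := by
  unfold zGen
  split_ifs
  · simp
  · simpa using hv

theorem four_dvd_eval_of_mem_zGenMulSpan (hv : 2 ∣ ∑ i, v i) {p : MvPolynomial (Fin n) ℤ}
    (hp : p ∈ zGenMulSpan n) : 4 ∣ eval v p := by
  induction hp using Submodule.span_induction with
  | mem p hp =>
    obtain ⟨i, j, -, rfl⟩ := hp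
    rw [eval_mul, show (4 : ℤ) = 2 * 2 by norm_num]
    exact mul_dvd_mul (two_dvd_eval_zGen hv i) (two_dvd_eval_zGen hv j)
  | zero => simp
  | add p q _ _ hp hq => simpa using dvd_add hp hq
  | smul a p _ hp => simpa [smul_eval] using hp.mul_left a

theorem four_dvd_add_of_diagSq_mem {d : Fin n → ℤ} (h : diagSq d ∈ zGenMulSpan n)
    {i j : Fin n} (hij : i ≠ j) : 4 ∣ d i + d j := by
  have hv : 2 ∣ ∑ k, (Pi.single i 1 + Pi.single j 1 : Fin n → ℤ) k := by
    simp [sum_add_distrib]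
  have := four_dvd_eval_of_mem_zGenMulSpan hv h
  rw [eval_diagSq, Fintype.sum_eq_add i j hij (fun k hk => by simp [hk.1, hk.2])] at this
  simpa [hij, hij.symm] using this

end Necessity

section Sufficiency

variable {n : ℕ}

theorem zGen_castSucc (i : Fin n) : zGen (n + 1) i.castSucc = 2 * X i.castSucc := by
  simp [zGen]

theorem zGen_last : zGen (n + 1) (Fin.last n) = ∑ i, X i := by
  simp [zGen]

theorem C_mul_X_mul_X_mem {a : ℤ} (ha : 4 ∣ a) (i j : Fin n) :
    C a * (X i.castSucc * X j.castSucc) ∈ zGenMulSpan (n + 1) := by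
  obtain ⟨b, rfl⟩ := ha
  have := Submodule.smul_mem _ b (zGen_mul_mem i.castSucc j.castSucc)
  rw [zGen_castSucc, zGen_castSucc, smul_eq_C_mul] at this
  convert this using 1
  simp only [map_mul, map_ofNat]
  ring

theorem C_mul_X_last_sq_sub_mem (c : ℤ) :
    C c * (X (Fin.last n) ^ 2 - (∑ i : Fin n, X i.castSucc) ^ 2) ∈ zGenMulSpan (n + 1) := by
  have : X (Fin.last n) ^ 2 - (∑ i : Fin n, X i.castSucc) ^ 2 =
      zGen (n + 1) (Fin.last n) * zGen (n + 1) (Fin.last n) -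
        ∑ i : Fin n, zGen (n + 1) i.castSucc * zGen (n + 1) (Fin.last n) := by
    simp only [zGen_castSucc, zGen_last, ← sum_mul, ← mul_sum,
      Fin.sum_univ_castSucc (f := fun i => (X i : MvPolynomial _ ℤ))]
    ring
  rw [this, ← smul_eq_C_mul]
  exact Submodule.smul_mem _ c (sub_mem (zGen_mul_mem _ _) (sum_mem fun i _ => zGen_mul_mem _ _))

theorem diagSq_mem_of_four_dvd_add {d : Fin (n + 1) → ℤ}
    (h : ∀ i j, i ≠ j → 4 ∣ d i + d j) : diagSq d ∈ zGenMulSpan (n + 1) := by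
  set c := d (Fin.last n)
  have hdiag (i : Fin n) : 4 ∣ d i.castSucc + c := h _ _ (Fin.castSucc_ne_last i)
  have hoff {i j : Fin n} (hij : i < j) : 4 ∣ 2 * c := by
    have := h _ _ (Fin.castSucc_lt_castSucc_iff.2 hij).ne
    have := hdiag i
    have := hdiag j
    omega
  have key : diagSq d = ∑ i : Fin n, C (d i.castSucc + c) * (X i.castSucc * X i.castSucc)
      + ∑ j : Fin n, ∑ i with i < j, C (2 * c) * (X i.castSucc * X j.castSucc)
      + C c * (X (Fin.last n) ^ 2 - (∑ i : Fin n, X i.castSucc) ^ 2) := by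
    rw [sq_sum_eq_sum_sq_add_two_mul]
    simp only [diagSq, Fin.sum_univ_castSucc, map_add, map_mul, map_ofNat, add_mul,
      sum_add_distrib, ← mul_sum, ← sq]
    ring
  rw [key]
  refine add_mem (add_mem ?_ ?_) (C_mul_X_last_sq_sub_mem c)
  · exact sum_mem fun i _ => C_mul_X_mul_X_mem (hdiag i) i i
  · exact sum_mem fun j _ => sum_mem fun i hi => C_mul_X_mul_X_mem (hoff (mem_filter.1 hi).2) i j

end Sufficiency

theorem diagSq_mem_zGenMulSpan_iff {n : ℕ} (d : Fin n → ℤ) :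
    diagSq d ∈ zGenMulSpan n ↔ ∀ i j, i ≠ j → 4 ∣ d i + d j := by
  refine ⟨fun h i j hij => four_dvd_add_of_diagSq_mem h hij, fun h => ?_⟩
  cases n with
  | zero => simp [diagSq, zero_mem]
  | succ n => exact diagSq_mem_of_four_dvd_add h

theorem stmt_9 (n : ℕ) (hn : 2 ≤ n) (d : Fin n → ℤ) :
    ((∑ i : Fin n, C (d i) * X i ^ 2) ∈
        Submodule.span ℤ {p : MvPolynomial (Fin n) ℤ |
          ∃ i j : Fin n, i ≤ j ∧ p = zGen n i * zGen n j}) ↔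
      (if n = 2 then
          d ⟨0, by omega⟩ + d ⟨1, by omega⟩ ≡ 0 [ZMOD 4]
        else
          (∀ i, (2 : ℤ) ∣ d i) ∧ ∀ i j, d i ≡ d j [ZMOD 4]) := by
  refine (diagSq_mem_zGenMulSpan_iff d).trans ?_
  split_ifs with h2
  · subst h2
    simp [Fin.forall_fin_two, Int.modEq_zero_iff_dvd, add_comm (d 1)]
  · exact forall_ne_four_dvd_add_iff (by simp; omega) d
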